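/- Let Λ = KQ/I be a tame finite-dimensional algebra with Gabriel quiver Q. Then for any two vertices i and j of Q there are at most two arrows from i to j. -/

import Mathlib

/-!
Background definitions: finite quivers, paths, bound quiver algebras with a fixed
admissible presentation by a quiver and minimal relations, tame/symmetric algebras,
syzygies and Ω-periodicity for right modules, etc.
-/

/-- A finite quiver. -/
structure FinQuiv : Type 1 where
  V : Type
  A : Type
  [fintypeV : Fintype V]
  [fintypeA : Fintype A]
  [decEqV : DecidableEq V]
  [decEqA : DecidableEq A]
  s : A → V
  t : A → V

attribute [instance] FinQuiv.fintypeV FinQuiv.fintypeA FinQuiv.decEqV FinQuiv.decEqA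

namespace FinQuiv

/-- Paths in a quiver, with a given source and target. -/
inductive Path (Q : FinQuiv) : Q.V → Q.V → Type
  | nil (v : Q.V) : Path Q v v
  | cons {v w : Q.V} (a : Q.A) (hs : Q.s a = v) (p : Path Q (Q.t a) w) : Path Q v w

/-- The length of a path. -/
def pathLength {Q : FinQuiv} : {u v : Q.V} → Path Q u v → ℕ
  | _, _, .nil _ => 0
  | _, _, .cons _ _ p => pathLength p + 1

/-- Concatenation of paths. -/
def pathComp {Q : FinQuiv} : {u v w : Q.V} → Path Q u v → Path Q v w → Path Q u w
  | _, _, _, .nil _, q => q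
  | _, _, _, .cons a hs p, q => .cons a hs (pathComp p q)

/-- A path together with its source and target. -/
def TotalPath (Q : FinQuiv) : Type := Σ u : Q.V, Σ v : Q.V, Path Q u v

/-- Source of a total path. -/
def TotalPath.src {Q : FinQuiv} (p : TotalPath Q) : Q.V := p.1

/-- Target of a total path. -/
def TotalPath.tgt {Q : FinQuiv} (p : TotalPath Q) : Q.V := p.2.1

/-- Length of a total path. -/
def TotalPath.len {Q : FinQuiv} (p : TotalPath Q) : ℕ := pathLength p.2.2

/-- Concatenation of total paths, when the endpoints match. -/
noncomputable def TotalPath.comp? {Q : FinQuiv} (p q : TotalPath Q) : Option (TotalPath Q) :=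
  if h : p.2.1 = q.1 then
    some ⟨p.1, q.2.1, pathComp p.2.2 (cast (by rw [h]) q.2.2)⟩
  else none

/-- The path consisting of a single arrow. -/
def tp1 (Q : FinQuiv) (a : Q.A) : TotalPath Q :=
  ⟨Q.s a, Q.t a, .cons a rfl (.nil (Q.t a))⟩

/-- The length 2 path given by two composable arrows. -/
def tp2 (Q : FinQuiv) (a b : Q.A) (h : Q.t a = Q.s b) : TotalPath Q :=
  ⟨Q.s a, Q.t b, .cons a rfl (.cons b h.symm (.nil (Q.t b)))⟩

/-- The length 3 path given by three composable arrows. -/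
def tp3 (Q : FinQuiv) (a b c : Q.A) (hab : Q.t a = Q.s b) (hbc : Q.t b = Q.s c) : TotalPath Q :=
  ⟨Q.s a, Q.t c, .cons a rfl (.cons b hab.symm (.cons c hbc.symm (.nil (Q.t c))))⟩

/-- The number of arrows of `Q` ending at `v`. -/
def inDeg (Q : FinQuiv) (v : Q.V) : ℕ := (Finset.univ.filter fun a => Q.t a = v).card

/-- The number of arrows of `Q` starting at `v`. -/
def outDeg (Q : FinQuiv) (v : Q.V) : ℕ := (Finset.univ.filter fun a => Q.s a = v).card

/-- A `1`-regular vertex. -/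
def IsOneReg (Q : FinQuiv) (v : Q.V) : Prop := inDeg Q v = 1 ∧ outDeg Q v = 1

/-- A `2`-regular vertex. -/
def IsTwoReg (Q : FinQuiv) (v : Q.V) : Prop := inDeg Q v = 2 ∧ outDeg Q v = 2

/-- A quiver is biregular if every vertex is `1`-regular or `2`-regular. -/
def Biregular (Q : FinQuiv) : Prop := ∀ v : Q.V, IsOneReg Q v ∨ IsTwoReg Q v

end FinQuiv

open FinQuiv

/-- The vector space of the path algebra `KQ` : formal `K`-linear combinations of paths. -/
abbrev KQMod (K : Type) [Field K] (Q : FinQuiv) : Type := TotalPath Q →₀ K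

/-- Left multiplication of a formal linear combination of paths by a path. -/
noncomputable def pmul {K : Type} [Field K] {Q : FinQuiv} (p : TotalPath Q)
    (x : KQMod K Q) : KQMod K Q :=
  x.sum fun w c =>
    match TotalPath.comp? p w with
    | some pw => Finsupp.single pw c
    | none => 0

/-- Right multiplication of a formal linear combination of paths by a path. -/
noncomputable def rmul {K : Type} [Field K] {Q : FinQuiv} (q : TotalPath Q)
    (x : KQMod K Q) : KQMod K Q :=
  x.sum fun w c =>
    match TotalPath.comp? w q with
    | some wq => Finsupp.single wq c
    | none => 0

/-- The two-sided ideal of `KQ` generated by a set of elements. -/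
noncomputable def idealSpan (K : Type) [Field K] (Q : FinQuiv) (R : Set (KQMod K Q)) :
    Submodule K (KQMod K Q) :=
  Submodule.span K {x | ∃ r ∈ R, ∃ p q : TotalPath Q, x = pmul p (rmul q r)}

/-- Evaluation of a path in an algebra, given images of trivial paths and arrows. -/
noncomputable def pathEval {Q : FinQuiv} {Λ : Type} [Ring Λ] (e : Q.V → Λ)
    (arrow : Q.A → Λ) : {u v : Q.V} → Path Q u v → Λ
  | _, _, .nil v => e v
  | _, _, .cons a _ p => arrow a * pathEval e arrow p

/-- Evaluation of a total path in an algebra. -/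
noncomputable def pathEvalT {Q : FinQuiv} {Λ : Type} [Ring Λ] (e : Q.V → Λ)
    (arrow : Q.A → Λ) (w : TotalPath Q) : Λ :=
  pathEval e arrow w.2.2

/-- Evaluation of a formal linear combination of paths in an algebra. -/
noncomputable def evalFun {Q : FinQuiv} {Λ : Type} [Ring Λ] {K : Type} [Field K]
    [Algebra K Λ] (e : Q.V → Λ) (arrow : Q.A → Λ) (x : KQMod K Q) : Λ :=
  x.sum fun w c => c • pathEvalT e arrow w

/-- An admissible presentation `Λ ≅ KQ/I` of an algebra `Λ` by the quiver `Q` and a fixed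
set of minimal relations generating the admissible ideal `I`.  Since `I` is admissible,
`Q` is the Gabriel quiver of `Λ`. -/
structure AdmissiblePresentation (K : Type) [Field K] (Q : FinQuiv) (Λ : Type) [Ring Λ]
    [Algebra K Λ] : Type where
  /-- images of the trivial paths: a complete set of orthogonal primitive idempotents -/
  e : Q.V → Λ
  /-- images of the arrows -/
  arrow : Q.A → Λ
  idem : ∀ v, e v * e v = e v
  orth : ∀ v w, v ≠ w → e v * e w = 0
  sum_e : (∑ v, e v) = 1
  arrow_mem : ∀ a, e (Q.s a) * arrow a * e (Q.t a) = arrow a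
  /-- the fixed set of minimal relations -/
  rels : Set (KQMod K Q)
  rels_finite : rels.Finite
  rels_parallel : ∀ ρ ∈ rels, ∀ w ∈ ρ.support, ∀ w' ∈ ρ.support,
    TotalPath.src w = TotalPath.src w' ∧ TotalPath.tgt w = TotalPath.tgt w'
  rels_len : ∀ ρ ∈ rels, ∀ w ∈ ρ.support, 2 ≤ TotalPath.len w
  rels_ne : ∀ ρ ∈ rels, ρ ≠ 0
  rels_minimal : ∀ ρ ∈ rels, ρ ∉ idealSpan K Q (rels \ {ρ})
  spanning : Submodule.span K (Set.range (pathEvalT e arrow)) = ⊤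
  ker_eq : ∀ x : KQMod K Q, evalFun e arrow x = 0 ↔ x ∈ idealSpan K Q rels
  admissible : ∃ m : ℕ, ∀ w : TotalPath Q, m ≤ TotalPath.len w → pathEvalT e arrow w = 0

/-- `w ≺ I` : the path `w` occurs as a summand of one of the fixed minimal relations. -/
def AdmissiblePresentation.Prec {K : Type} [Field K] {Q : FinQuiv} {Λ : Type} [Ring Λ]
    [Algebra K Λ] (P : AdmissiblePresentation K Q Λ) (w : TotalPath Q) : Prop :=
  ∃ ρ ∈ P.rels, w ∈ ρ.support

/-- An algebra is symmetric if it carries a non-degenerate associative symmetric bilinear form. -/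
def IsSymmetricAlg (K : Type) [Field K] (Λ : Type) [Ring Λ] [Algebra K Λ] : Prop :=
  ∃ B : Λ →ₗ[K] Λ →ₗ[K] K,
    (∀ x y, B x y = B y x) ∧ (∀ x y z, B (x * y) z = B x (y * z)) ∧
    (∀ x, (∀ y, B x y = 0) → x = 0)

/-- An algebra is indecomposable (connected) if it is nonzero and has no nontrivial
central idempotents. -/
def IndecAlg (Λ : Type) [Ring Λ] : Prop :=
  (0 : Λ) ≠ 1 ∧ ∀ z : Λ, z * z = z → (∀ x, z * x = x * z) → z = 0 ∨ z = 1

/-- An indecomposable (right) module: nonzero, with no nontrivial direct sum decomposition. -/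
def IndecMod {Λ : Type} [Ring Λ] (N : ModuleCat.{0} Λᵐᵒᵖ) : Prop :=
  Nontrivial N ∧ ∀ U V : Submodule Λᵐᵒᵖ N, IsCompl U V → U = ⊥ ∨ V = ⊥

/-- The dimension over `K` of a module over a `K`-algebra. -/
noncomputable def kdim (K : Type) [Field K] {Λ : Type} [Ring Λ] [Algebra K Λ]
    (N : ModuleCat.{0} Λᵐᵒᵖ) : ℕ :=
  letI : Module K N := Module.compHom N (algebraMap K Λᵐᵒᵖ)
  Module.finrank K N

/-- `Λ` has infinite representation type: no finite list of modules exhausts all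
finite-dimensional indecomposable right `Λ`-modules up to isomorphism. -/
def RepInfinite (Λ : Type) [Ring Λ] : Prop :=
  ∀ (n : ℕ) (F : Fin n → ModuleCat.{0} Λᵐᵒᵖ),
    ∃ N : ModuleCat.{0} Λᵐᵒᵖ, Module.Finite Λᵐᵒᵖ N ∧ IndecMod N ∧
      ∀ i : Fin n, IsEmpty (N ≃ₗ[Λᵐᵒᵖ] F i)

/-- The `K[x]`-`Λ`-bimodules parametrising one-parameter families of modules
in the definition of tameness; they are finitely generated free over `K[x]`. -/
structure TameWitness (K : Type) [Field K] (Λ : Type) [Ring Λ] [Algebra K Λ] : Type 1 where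
  M : Type
  [acg : AddCommGroup M]
  [modP : Module (Polynomial K) M]
  [modL : Module Λᵐᵒᵖ M]
  [comm : SMulCommClass (Polynomial K) Λᵐᵒᵖ M]
  free : Module.Free (Polynomial K) M
  finite : Module.Finite (Polynomial K) M
  compat : ∀ (c : K) (m : M), (Polynomial.C c) • m = (MulOpposite.op (algebraMap K Λ c)) • m

attribute [instance] TameWitness.acg TameWitness.modP TameWitness.modL TameWitness.comm

/-- Multiplication by `x - λ` on a `K[x]`-`Λ`-bimodule, as a map of right `Λ`-modules. -/
noncomputable def polyShift {K : Type} [Field K] {Λ : Type} [Ring Λ] {M : Type}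
    [AddCommGroup M] [Module (Polynomial K) M] [Module Λᵐᵒᵖ M]
    [SMulCommClass (Polynomial K) Λᵐᵒᵖ M] (lam : K) : M →ₗ[Λᵐᵒᵖ] M where
  toFun m := (Polynomial.X - Polynomial.C lam) • m
  map_add' _ _ := smul_add _ _ _
  map_smul' r m := by simpa using smul_comm (Polynomial.X - Polynomial.C lam) r m

/-- Drozd tameness: for each dimension `d` there are finitely many `K[x]`-`Λ`-bimodules,
finitely generated free over `K[x]`, such that every indecomposable `d`-dimensional right
`Λ`-module is a specialization `K[x]/(x-λ) ⊗ M` of one of them. -/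
def IsTame (K : Type) [Field K] (Λ : Type) [Ring Λ] [Algebra K Λ] : Prop :=
  ∀ d : ℕ, ∃ (n : ℕ) (W : Fin n → TameWitness K Λ),
    ∀ N : ModuleCat.{0} Λᵐᵒᵖ, Module.Finite Λᵐᵒᵖ N → IndecMod N → kdim K N = d →
      ∃ (i : Fin n) (lam : K),
        Nonempty (N ≃ₗ[Λᵐᵒᵖ]
          ((W i).M ⧸ LinearMap.range (polyShift (K := K) (Λ := Λ) (M := (W i).M) lam)))

/-- `N` is a syzygy of `M` : the kernel of a projective cover of `M`. -/
def IsSyzygy {Λ : Type} [Ring Λ] (N M : ModuleCat.{0} Λᵐᵒᵖ) : Prop :=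
  ∃ (P : ModuleCat.{0} Λᵐᵒᵖ) (f : P →ₗ[Λᵐᵒᵖ] M),
    Module.Projective Λᵐᵒᵖ P ∧ Function.Surjective f ∧
    (∀ L : Submodule Λᵐᵒᵖ P, L ⊔ LinearMap.ker f = ⊤ → L = ⊤) ∧
    Nonempty (N ≃ₗ[Λᵐᵒᵖ] LinearMap.ker f)

/-- `N ≅ Ω^n(M)`. -/
def IsNSyzygy {Λ : Type} [Ring Λ] : ℕ → ModuleCat.{0} Λᵐᵒᵖ → ModuleCat.{0} Λᵐᵒᵖ → Prop
  | 0, N, M => Nonempty (N ≃ₗ[Λᵐᵒᵖ] M)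
  | n + 1, N, M => ∃ X : ModuleCat.{0} Λᵐᵒᵖ, IsSyzygy X M ∧ IsNSyzygy n N X

/-- `M` is `Ω`-periodic of period exactly `n`. -/
def IsPeriodicOfPeriod {Λ : Type} [Ring Λ] (M : ModuleCat.{0} Λᵐᵒᵖ) (n : ℕ) : Prop :=
  1 ≤ n ∧ IsNSyzygy n M M ∧ ∀ m : ℕ, 1 ≤ m → m < n → ¬ IsNSyzygy m M M

/-- All simple right `Λ`-modules are `Ω`-periodic of period exactly `4`. -/
def SimplesPeriodFour (Λ : Type) [Ring Λ] : Prop :=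
  ∀ S : ModuleCat.{0} Λᵐᵒᵖ, IsSimpleModule Λᵐᵒᵖ S → IsPeriodicOfPeriod S 4

/-- `S` is (isomorphic to) the simple module `S_i` at the vertex `i`. -/
def IsSimpleAt {K : Type} [Field K] {Q : FinQuiv} {Λ : Type} [Ring Λ] [Algebra K Λ]
    (P : AdmissiblePresentation K Q Λ) (i : Q.V) (S : ModuleCat.{0} Λᵐᵒᵖ) : Prop :=
  IsSimpleModule Λᵐᵒᵖ S ∧ ∃ m : S, (MulOpposite.op (P.e i)) • m ≠ 0

/-- `dim_K (x · Λ · y)`, giving the entries of the Cartan matrix when `x`, `y` are the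
idempotents at two vertices. -/
noncomputable def cornerDim (K : Type) [Field K] {Λ : Type} [Ring Λ] [Algebra K Λ]
    (x y : Λ) : ℕ :=
  Module.finrank K (LinearMap.range ((LinearMap.mulLeft K x).comp (LinearMap.mulRight K y)))

/-- `dim_K (x · Λ)`, the dimension of the projective module `xΛ` for an idempotent `x`. -/
noncomputable def projDim (K : Type) [Field K] {Λ : Type} [Ring Λ] [Algebra K Λ]
    (x : Λ) : ℕ :=
  Module.finrank K (LinearMap.range (LinearMap.mulLeft K x))

/-!
Suppose there are three arrows `a₁ a₂ a₃ : i → j`. For `s t : K` let `M(s, t)` be `K²` with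
`a₁, a₂, a₃` acting by `1, s, t` times the map `e₀ ↦ e₁`; all paths of length two act by zero, so
the relations of `I` hold and `M(s, t)` is an indecomposable two-dimensional `Λ`-module.
Tameness gives finitely many `K[x]`-`Λ`-bimodules `W`, free over `K[x]`, such that every `M(s, t)`
is some `W/(x - λ)W`. In a `K[x]`-basis of `W` each arrow acts by a polynomial matrix `F_a`, and
`M(s, t) ≅ W/(x - λ)W` forces `F_{a₂}(λ) = s F_{a₁}(λ)` and `F_{a₃}(λ) = t F_{a₁}(λ)` with
`F_{a₁}(λ) ≠ 0`. For all but finitely many `s` the polynomial `F_{a₂} - s F_{a₁}` is nonzero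
wherever `F_{a₁}` is, which leaves finitely many `λ` and hence finitely many `t`; since `K` is
infinite, some `M(s, t)` is not covered.
-/

open FinQuiv MulOpposite Polynomial Matrix

def FinQuiv.tp0 (Q : FinQuiv) (v : Q.V) : TotalPath Q := ⟨v, v, .nil v⟩

/-- The data of a unital ring map `KQ → B`: a complete set of orthogonal idempotents for the
vertices and compatible images of the arrows. -/
structure FinQuiv.RingRep (Q : FinQuiv) (B : Type) [Ring B] where
  e : Q.V → B
  ar : Q.A → B
  idem : ∀ v, e v * e v = e v
  orth : ∀ v w, v ≠ w → e v * e w = 0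
  sum_e : ∑ v, e v = 1
  sandwich : ∀ a, e (Q.s a) * ar a * e (Q.t a) = ar a

namespace FinQuiv.RingRep

variable {Q : FinQuiv} {B : Type} [Ring B] (R : RingRep Q B)

theorem e_mul_ar (a : Q.A) : R.e (Q.s a) * R.ar a = R.ar a := by
  rw [← R.sandwich, ← mul_assoc, ← mul_assoc, R.idem]

theorem ar_mul_e (a : Q.A) : R.ar a * R.e (Q.t a) = R.ar a := by
  rw [← R.sandwich, mul_assoc, R.idem]

theorem e_mul_pathEval {u v : Q.V} (p : Path Q u v) :
    R.e u * pathEval R.e R.ar p = pathEval R.e R.ar p := by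
  cases p with
  | nil => exact R.idem u
  | cons a hs p =>
    subst hs
    exact (mul_assoc _ _ _).symm.trans (congrArg (· * _) (R.e_mul_ar a))

theorem pathEval_mul_e {u v : Q.V} (p : Path Q u v) :
    pathEval R.e R.ar p * R.e v = pathEval R.e R.ar p := by
  induction p with
  | nil w => exact R.idem w
  | cons a _ p ih => exact (mul_assoc _ _ _).trans (congrArg (_ * ·) ih)

theorem pathEval_pathComp {u v w : Q.V} (p : Path Q u v) (q : Path Q v w) :
    pathEval R.e R.ar (pathComp p q) = pathEval R.e R.ar p * pathEval R.e R.ar q := by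
  induction p with
  | nil => exact (R.e_mul_pathEval q).symm
  | cons a _ p ih => exact (congrArg (_ * ·) (ih q)).trans (mul_assoc _ _ _).symm

theorem pathEvalT_of_comp?_eq_some {p w pw : TotalPath Q} (h : p.comp? w = some pw) :
    pathEvalT R.e R.ar pw = pathEvalT R.e R.ar p * pathEvalT R.e R.ar w := by
  obtain ⟨u, v, p⟩ := p
  obtain ⟨v', w', q⟩ := w
  unfold TotalPath.comp? at h
  split_ifs at h with hv
  cases hv
  cases h
  exact R.pathEval_pathComp p q

theorem pathEvalT_mul_of_comp?_eq_none {p w : TotalPath Q} (h : p.comp? w = none) :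
    pathEvalT R.e R.ar p * pathEvalT R.e R.ar w = 0 := by
  obtain ⟨u, v, p⟩ := p
  obtain ⟨v', w', q⟩ := w
  have hv : v ≠ v' := fun hv => by simp [TotalPath.comp?, hv] at h
  change pathEval R.e R.ar p * pathEval R.e R.ar q = 0
  rw [← R.pathEval_mul_e p, ← R.e_mul_pathEval q, mul_assoc, ← mul_assoc (R.e v), R.orth v v' hv,
    zero_mul, mul_zero]

variable (K : Type) [Field K] [Algebra K B]

/-- `evalFun R.e R.ar`, as a linear map (the two agree definitionally). -/
noncomputable def eval : KQMod K Q →ₗ[K] B := Finsupp.linearCombination K (pathEvalT R.e R.ar)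

variable {K}

theorem eval_pmul (p : TotalPath Q) (x : KQMod K Q) :
    R.eval K (pmul p x) = pathEvalT R.e R.ar p * R.eval K x := by
  simp only [eval, pmul, map_finsuppSum, Finsupp.linearCombination_apply, Finsupp.mul_sum]
  refine Finsupp.sum_congr fun w _ => ?_
  rw [mul_smul_comm]
  cases h : p.comp? w with
  | none => simp [R.pathEvalT_mul_of_comp?_eq_none h]
  | some pw => simp [R.pathEvalT_of_comp?_eq_some h]

theorem eval_rmul (q : TotalPath Q) (x : KQMod K Q) :
    R.eval K (rmul q x) = R.eval K x * pathEvalT R.e R.ar q := by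
  simp only [eval, rmul, map_finsuppSum, Finsupp.linearCombination_apply, Finsupp.sum_mul]
  refine Finsupp.sum_congr fun w _ => ?_
  rw [smul_mul_assoc]
  cases h : w.comp? q with
  | none => simp [R.pathEvalT_mul_of_comp?_eq_none h]
  | some wq => simp [R.pathEvalT_of_comp?_eq_some h]

theorem eval_eq_zero_of_mem_idealSpan {rels : Set (KQMod K Q)}
    (hR : ∀ ρ ∈ rels, R.eval K ρ = 0) {x : KQMod K Q} (hx : x ∈ idealSpan K Q rels) :
    R.eval K x = 0 := by
  rw [← LinearMap.mem_ker]
  refine Submodule.span_le.mpr ?_ hx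
  rintro _ ⟨ρ, hρ, p, q, rfl⟩
  simp [eval_pmul, eval_rmul, hR ρ hρ]

theorem eval_single_one (w : TotalPath Q) :
    R.eval K (Finsupp.single w 1) = pathEvalT R.e R.ar w := by
  simp [eval]

theorem eval_sum_tp0 : R.eval K (∑ v, Finsupp.single (tp0 Q v) 1) = 1 := by
  simp only [map_sum, eval_single_one, ← R.sum_e]
  rfl

theorem eval_arrow (a : Q.A) : R.eval K (Finsupp.single (tp1 Q a) 1) = R.ar a :=
  (R.eval_single_one _).trans (R.ar_mul_e a)

theorem pathEval_eq_zero_of_two_le_pathLength (har : ∀ a b, R.ar a * R.ar b = 0) {u v : Q.V}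
    (p : Path Q u v) (hp : 2 ≤ pathLength p) : pathEval R.e R.ar p = 0 := by
  match p, hp with
  | .cons a _ (.cons b _ p), _ =>
    change R.ar a * (R.ar b * pathEval R.e R.ar p) = 0
    rw [← mul_assoc, har, zero_mul]

theorem eval_eq_zero_of_two_le_len (har : ∀ a b, R.ar a * R.ar b = 0) {ρ : KQMod K Q}
    (hρ : ∀ w ∈ ρ.support, 2 ≤ w.len) : R.eval K ρ = 0 := by
  rw [eval, Finsupp.linearCombination_apply]
  exact Finset.sum_eq_zero fun w hw =>
    smul_eq_zero_of_right _ (R.pathEval_eq_zero_of_two_le_pathLength har w.2.2 (hρ w hw))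

end FinQuiv.RingRep

namespace AdmissiblePresentation

variable {K : Type} [Field K] {Q : FinQuiv} {Λ : Type} [Ring Λ] [Algebra K Λ]
  (P : AdmissiblePresentation K Q Λ) {B : Type} [Ring B] [Algebra K B]

abbrev toRingRep : RingRep Q Λ := ⟨P.e, P.arrow, P.idem, P.orth, P.sum_e, P.arrow_mem⟩

theorem eval_surjective : Function.Surjective (P.toRingRep.eval K) := by
  rw [← LinearMap.range_eq_top, RingRep.eval, Finsupp.range_linearCombination]
  exact P.spanning

variable (R : RingRep Q B) (hR : ∀ ρ ∈ P.rels, R.eval K ρ = 0)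

noncomputable def liftLinear : Λ →ₗ[K] B :=
  (LinearMap.ker (P.toRingRep.eval K)).liftQ (R.eval K)
      (fun _ hx => R.eval_eq_zero_of_mem_idealSpan hR ((P.ker_eq _).mp hx)) ∘ₗ
    ((P.toRingRep.eval K).quotKerEquivOfSurjective P.eval_surjective).symm.toLinearMap

theorem liftLinear_eval (ξ : KQMod K Q) :
    P.liftLinear R hR (P.toRingRep.eval K ξ) = R.eval K ξ := by
  simp only [liftLinear, LinearMap.comp_apply, LinearEquiv.coe_coe,
    LinearMap.quotKerEquivOfSurjective_symm_apply]
  exact Submodule.liftQ_apply _ _ _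

theorem liftLinear_pathEvalT_mul (w : TotalPath Q) (y : Λ) :
    P.liftLinear R hR (pathEvalT P.e P.arrow w * y) =
      pathEvalT R.e R.ar w * P.liftLinear R hR y := by
  obtain ⟨η, rfl⟩ := P.eval_surjective y
  rw [← P.toRingRep.eval_pmul, liftLinear_eval, liftLinear_eval, R.eval_pmul]

theorem liftLinear_one : P.liftLinear R hR 1 = 1 := by
  rw [← P.toRingRep.eval_sum_tp0 (K := K), liftLinear_eval, R.eval_sum_tp0]

theorem liftLinear_mul (x y : Λ) :
    P.liftLinear R hR (x * y) = P.liftLinear R hR x * P.liftLinear R hR y := by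
  refine LinearMap.congr_fun (LinearMap.ext_on_range P.spanning fun w => ?_ :
    P.liftLinear R hR ∘ₗ LinearMap.mulRight K y =
      LinearMap.mulRight K (P.liftLinear R hR y) ∘ₗ P.liftLinear R hR) x
  have hw := P.liftLinear_eval R hR (Finsupp.single w 1)
  rw [RingRep.eval_single_one, RingRep.eval_single_one] at hw
  simp [P.liftLinear_pathEvalT_mul R hR, hw]

noncomputable def lift : Λ →ₐ[K] B :=
  AlgHom.ofLinearMap (P.liftLinear R hR) (P.liftLinear_one R hR) (P.liftLinear_mul R hR)

theorem lift_arrow (a : Q.A) : P.lift R hR (P.arrow a) = R.ar a := by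
  have h := P.liftLinear_eval R hR (Finsupp.single (tp1 Q a) 1)
  rwa [RingRep.eval_arrow, RingRep.eval_arrow] at h

end AdmissiblePresentation

section TwoDim

variable {K : Type} [Field K] {Q : FinQuiv}

/-- `K²` with coordinate `0` at vertex `i` and coordinate `1` at vertex `j`, an arrow `a : i → j`
acting by `φ a` and all other arrows by `0`. -/
noncomputable def FinQuiv.twoDimRep (i j : Q.V) (φ : Q.A → K) :
    RingRep Q (Matrix (Fin 2) (Fin 2) K) where
  e v := diagonal fun k => if ![i, j] k = v then 1 else 0
  ar a := if Q.s a = i ∧ Q.t a = j then single 0 1 (φ a) else 0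
  idem v := by
    rw [diagonal_mul_diagonal]
    congr 1; ext k; split_ifs <;> simp
  orth v w hvw := by
    rw [diagonal_mul_diagonal, ← diagonal_zero]
    congr 1; ext k; split_ifs with h1 h2 <;> simp_all
  sum_e := by
    ext k l
    simp [Matrix.sum_apply, diagonal_apply, one_apply]
  sandwich a := by
    split_ifs with h
    · obtain ⟨rfl, rfl⟩ := h
      ext k l
      fin_cases k <;> fin_cases l <;> simp [mul_diagonal]
    · simp

theorem FinQuiv.twoDimRep_ar_mul_ar (i j : Q.V) (φ : Q.A → K) (a b : Q.A) :
    (twoDimRep i j φ).ar a * (twoDimRep i j φ).ar b = 0 := by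
  simp only [twoDimRep]
  split_ifs <;> simp

end TwoDim

section MatrixRightModule

variable {K : Type} [Field K] {Λ : Type} [Ring Λ] [Algebra K Λ] {n : Type} [Fintype n]
  [DecidableEq n]

/-- Row vectors, on which `Λ` acts from the right through `ψ`. -/
noncomputable def matrixRightModule (ψ : Λ →ₐ[K] Matrix n n K) : ModuleCat.{0} Λᵐᵒᵖ :=
  (ModuleCat.restrictScalars (AlgHom.op ψ).toRingHom).obj (ModuleCat.of (Matrix n n K)ᵐᵒᵖ (n → K))

variable (ψ : Λ →ₐ[K] Matrix n n K)

def matrixRightModule.mk (v : n → K) : matrixRightModule ψ := v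

namespace matrixRightModule

theorem mk_injective : Function.Injective (mk ψ) := fun _ _ => id

@[simp] theorem mk_zero : mk ψ 0 = 0 := rfl

theorem op_smul_mk (x : Λ) (v : n → K) : op x • mk ψ v = mk ψ (v ᵥ* ψ x) := rfl

theorem algebraMap_smul_mk (c : K) (v : n → K) : algebraMap K Λᵐᵒᵖ c • mk ψ v = mk ψ (c • v) := by
  rw [MulOpposite.algebraMap_apply, op_smul_mk, AlgHom.commutes, Algebra.algebraMap_eq_smul_one,
    vecMul_smul, vecMul_one]

end matrixRightModule

open matrixRightModule

theorem mem_annihilator_matrixRightModule_iff (x : Λ) :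
    op x ∈ Module.annihilator Λᵐᵒᵖ (matrixRightModule ψ) ↔ ψ x = 0 := by
  rw [Module.mem_annihilator, Matrix.ext_iff_vecMul]
  exact ⟨fun h v => (h (mk ψ v)).trans (vecMul_zero v).symm,
    fun h v => (h v).trans (vecMul_zero v)⟩

theorem kdim_matrixRightModule : kdim K (matrixRightModule ψ) = Fintype.card n := by
  let _ : Module K (matrixRightModule ψ) := Module.compHom _ (algebraMap K Λᵐᵒᵖ)
  let e : (n → K) ≃ₗ[K] matrixRightModule ψ :=
    { toFun := mk ψ
      invFun := fun v => v
      map_add' := fun _ _ => rfl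
      map_smul' := fun c v => (algebraMap_smul_mk ψ c v).symm
      left_inv := fun _ => rfl
      right_inv := fun _ => rfl }
  exact e.finrank_eq.symm.trans (Module.finrank_fintype_fun_eq_card K)

end MatrixRightModule

theorem pi_single_one_mem_of_ne_zero {K : Type} [Field K] {S : Set (Fin 2 → K)}
    (hsmul : ∀ (c : K), ∀ w ∈ S, c • w ∈ S) (hmul : ∀ w ∈ S, w ᵥ* single 0 1 1 ∈ S)
    {u : Fin 2 → K} (hu : u ∈ S) (hu0 : u ≠ 0) : Pi.single 1 1 ∈ S := by
  by_cases h0 : u 0 = 0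
  · have h1 : u 1 ≠ 0 := fun h1 => hu0 (funext fun k => by fin_cases k <;> assumption)
    convert hsmul (u 1)⁻¹ u hu using 1
    funext k; fin_cases k <;> simp [h0, h1]
  · convert hsmul (u 0)⁻¹ _ (hmul u hu) using 1
    funext k; fin_cases k <;> simp [h0, Matrix.vecMul, dotProduct, Fin.sum_univ_two]

section Indec
variable {K : Type} [Field K] {Λ : Type} [Ring Λ] [Algebra K Λ]
  (ψ : Λ →ₐ[K] Matrix (Fin 2) (Fin 2) K) {x : Λ} (hx : ψ x = Matrix.single 0 1 1)
include hx

open matrixRightModule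

theorem mk_single_one_mem_of_ne_bot {U : Submodule Λᵐᵒᵖ (matrixRightModule ψ)} (hU : U ≠ ⊥) :
    mk ψ (Pi.single 1 1) ∈ U := by
  obtain ⟨u, hu, hu0⟩ := Submodule.exists_mem_ne_zero_of_ne_bot hU
  obtain ⟨u, rfl⟩ : ∃ v, mk ψ v = u := ⟨u, rfl⟩
  refine pi_single_one_mem_of_ne_zero (S := mk ψ ⁻¹' U) (fun c w hw => ?_) (fun w hw => ?_)
    hu (fun h => hu0 (h ▸ mk_zero ψ))
  · change mk ψ (c • w) ∈ U
    exact algebraMap_smul_mk ψ c w ▸ U.smul_mem _ hw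
  · exact hx ▸ U.smul_mem (op x) hw

theorem indecMod_matrixRightModule : IndecMod (matrixRightModule ψ) := by
  refine ⟨inferInstanceAs (Nontrivial (Fin 2 → K)), fun U V hUV => ?_⟩
  by_contra! h
  have hmem := Submodule.mem_inf.mpr
    ⟨mk_single_one_mem_of_ne_bot ψ hx h.1, mk_single_one_mem_of_ne_bot ψ hx h.2⟩
  rw [hUV.inf_eq_bot, Submodule.mem_bot, ← mk_zero ψ] at hmem
  exact one_ne_zero (congrFun (mk_injective ψ hmem) 1)
end Indec

section PolyShift

variable {K : Type} [Field K] {Λ : Type} [Ring Λ] {M : Type} [AddCommGroup M]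
  [Module K[X] M] [Module Λᵐᵒᵖ M] [SMulCommClass K[X] Λᵐᵒᵖ M] (lam : K)

theorem mem_range_polyShift_iff {ι : Type} [Fintype ι] (b : Module.Basis ι K[X] M) (y : M) :
    y ∈ LinearMap.range (polyShift (Λ := Λ) lam) ↔ ∀ l, eval lam (b.repr y l) = 0 := by
  refine ⟨?_, fun h => ?_⟩
  · rintro ⟨w, rfl⟩ l
    simp [polyShift]
  · choose q hq using fun l => dvd_iff_isRoot.mpr (h l)
    refine ⟨∑ l, q l • b l, ?_⟩
    simp only [polyShift, LinearMap.coe_mk, AddHom.coe_mk, Finset.smul_sum, smul_smul, ← hq]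
    exact b.sum_repr y

theorem smul_mem_range_polyShift (p : K[X]) {y : M}
    (hy : y ∈ LinearMap.range (polyShift (Λ := Λ) lam)) :
    p • y ∈ LinearMap.range (polyShift (Λ := Λ) lam) := by
  obtain ⟨w, rfl⟩ := hy
  exact ⟨p • w, smul_comm _ _ _⟩

end PolyShift

namespace TameWitness

variable {K : Type} [Field K] {Λ : Type} [Ring Λ] [Algebra K Λ] (W : TameWitness K Λ)

noncomputable abbrev rank : ℕ := Module.finrank K[X] W.M

noncomputable def basis : Module.Basis (Fin W.rank) K[X] W.M :=
  haveI := W.free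
  haveI := W.finite
  Module.finBasis K[X] W.M

noncomputable def coeff (x : Λ) (k l : Fin W.rank) : K[X] :=
  W.basis.repr (op x • W.basis k) l

theorem coeff_sub_smul (x y : Λ) (c : K) (k l) :
    W.coeff (x - c • y) k l = W.coeff x k l - C c * W.coeff y k l := by
  have hsmul : op (c • y) • W.basis k = C c • (op y • W.basis k) := by
    rw [Algebra.smul_def, op_mul, mul_smul, ← W.compat]
    exact (smul_comm (C c) (op y) _).symm
  simp only [coeff, op_sub, sub_smul, hsmul, map_sub, Finsupp.sub_apply, map_smul,
    Finsupp.smul_apply, smul_eq_mul]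

theorem mem_annihilator_specialization_iff (lam : K) (x : Λ) :
    op x ∈ Module.annihilator Λᵐᵒᵖ (W.M ⧸ LinearMap.range (polyShift (Λ := Λ) (M := W.M) lam)) ↔
      ∀ k l, eval lam (W.coeff x k l) = 0 := by
  have hbasis : ∀ k, (∀ l, eval lam (W.coeff x k l) = 0) ↔
      op x • W.basis k ∈ LinearMap.range (polyShift (Λ := Λ) lam) := fun k =>
    (mem_range_polyShift_iff lam W.basis _).symm
  simp only [Module.mem_annihilator, hbasis]
  refine ⟨fun h k => ?_, fun h w => ?_⟩
  · simpa [← Submodule.Quotient.mk_smul] using h (Submodule.Quotient.mk (W.basis k))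
  · obtain ⟨w, rfl⟩ := Submodule.Quotient.mk_surjective _ w
    rw [← Submodule.Quotient.mk_smul, Submodule.Quotient.mk_eq_zero, ← W.basis.sum_repr w,
      Finset.smul_sum]
    refine Submodule.sum_mem _ fun k _ => ?_
    rw [← smul_comm (W.basis.repr w k) (op x)]
    exact smul_mem_range_polyShift lam _ (h k)

end TameWitness

section Genericity

variable {K : Type} [Field K] [Infinite K] {ι : Type} [Finite ι]

theorem Polynomial.exists_forall_ne_C_mul (f g : ι → K[X]) :
    ∃ s : K, ∀ z, f z ≠ 0 → g z ≠ C s * f z := by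
  have hfin : (⋃ z, {s : K | f z ≠ 0 ∧ g z = C s * f z}).Finite :=
    Set.finite_iUnion fun z => Set.Subsingleton.finite fun s ⟨hf, hs⟩ s' ⟨_, hs'⟩ =>
      C_injective (mul_right_cancel₀ hf (hs.symm.trans hs'))
  obtain ⟨s, hs⟩ := hfin.exists_notMem
  exact ⟨s, fun z hf hg => hs (Set.mem_iUnion.mpr ⟨z, hf, hg⟩)⟩

theorem Polynomial.exists_forall_not_eval_proportional (f g h : ι → K[X]) :
    ∃ s t : K, ∀ z lam, eval lam (f z) ≠ 0 → eval lam (g z) = s * eval lam (f z) →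
      eval lam (h z) ≠ t * eval lam (f z) := by
  obtain ⟨s, hs⟩ := exists_forall_ne_C_mul f g
  have hroots : ∀ z, {lam | eval lam (f z) ≠ 0 ∧ eval lam (g z - C s * f z) = 0}.Finite := by
    intro z
    by_cases hf : f z = 0
    · simp [hf]
    · exact (finite_setOfPred_isRoot (sub_ne_zero.mpr (hs z hf))).subset fun lam h => h.2
  obtain ⟨t, ht⟩ := (Set.finite_iUnion fun z =>
    ((hroots z).image fun lam => eval lam (h z) / eval lam (f z))).exists_notMem
  refine ⟨s, t, fun z lam hf hg hh => ht (Set.mem_iUnion.mpr ⟨z, lam, ⟨hf, ?_⟩, ?_⟩)⟩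
  · simp [hg]
  · exact (div_eq_iff hf).mpr hh

end Genericity

theorem finite_of_kdim_pos {K : Type} [Field K] {Λ : Type} [Ring Λ] [Algebra K Λ]
    (N : ModuleCat.{0} Λᵐᵒᵖ) (h : 0 < kdim K N) : Module.Finite Λᵐᵒᵖ N := by
  let _ : Module K N := Module.compHom N (algebraMap K Λᵐᵒᵖ)
  have : IsScalarTower K Λᵐᵒᵖ N := ⟨fun c r n => by
    change (c • r) • n = algebraMap K Λᵐᵒᵖ c • r • n
    rw [Algebra.smul_def, mul_smul]⟩
  have : Module.Finite K N := Module.finite_of_finrank_pos h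
  exact Module.Finite.of_restrictScalars_finite K Λᵐᵒᵖ N

namespace AdmissiblePresentation

variable {K : Type} [Field K] {Q : FinQuiv} {Λ : Type} [Ring Λ] [Algebra K Λ]
  (P : AdmissiblePresentation K Q Λ) (i j : Q.V) (φ : Q.A → K)

noncomputable def twoDimLift : Λ →ₐ[K] Matrix (Fin 2) (Fin 2) K :=
  P.lift (twoDimRep i j φ) fun ρ hρ =>
    (twoDimRep i j φ).eval_eq_zero_of_two_le_len (twoDimRep_ar_mul_ar i j φ) (P.rels_len ρ hρ)

theorem twoDimLift_arrow {a : Q.A} (hs : Q.s a = i) (ht : Q.t a = j) :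
    P.twoDimLift i j φ (P.arrow a) = Matrix.single 0 1 (φ a) := by
  rw [twoDimLift, lift_arrow]
  simp [twoDimRep, hs, ht]

end AdmissiblePresentation

theorem IsTame.exists_witnesses_of_twoDim {K : Type} [Field K] {Λ : Type} [Ring Λ]
    [Algebra K Λ] (htame : IsTame K Λ) :
    ∃ (n : ℕ) (W : Fin n → TameWitness K Λ), ∀ ψ : Λ →ₐ[K] Matrix (Fin 2) (Fin 2) K,
      (∃ x, ψ x = single 0 1 1) →
        ∃ m lam, ∀ y, ψ y = 0 ↔ ∀ k l, eval lam ((W m).coeff y k l) = 0 := by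
  obtain ⟨n, W, hW⟩ := htame 2
  refine ⟨n, W, fun ψ ⟨x, hx⟩ => ?_⟩
  have hdim : kdim K (matrixRightModule ψ) = 2 := kdim_matrixRightModule ψ
  obtain ⟨m, lam, ⟨e⟩⟩ := hW _ (finite_of_kdim_pos _ (hdim ▸ two_pos))
    (indecMod_matrixRightModule ψ hx) hdim
  refine ⟨m, lam, fun y => ?_⟩
  rw [← mem_annihilator_matrixRightModule_iff, e.annihilator_eq,
    TameWitness.mem_annihilator_specialization_iff]

theorem at_most_two_parallel_arrows_general
    (K : Type) [Field K] [IsAlgClosed K]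
    (Λ : Type) [Ring Λ] [Algebra K Λ]
    (Q : FinQuiv) (P : AdmissiblePresentation K Q Λ)
    (htame : IsTame K Λ) :
    ∀ i j : Q.V, (Finset.univ.filter fun a : Q.A => Q.s a = i ∧ Q.t a = j).card ≤ 2 := by
  intro i j
  by_contra! h3
  obtain ⟨a₁, h₁, a₂, h₂, a₃, h₃, h₁₂, h₁₃, h₂₃⟩ := Finset.two_lt_card.mp h3
  simp only [Finset.mem_filter, Finset.mem_univ, true_and] at h₁ h₂ h₃
  obtain ⟨n, W, hW⟩ := htame.exists_witnesses_of_twoDim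
  let F (a : Q.A) (z : Σ m, Fin (W m).rank × Fin (W m).rank) :=
    (W z.1).coeff (P.arrow a) z.2.1 z.2.2
  obtain ⟨s, t, hst⟩ := exists_forall_not_eval_proportional (F a₁) (F a₂) (F a₃)
  set ψ := P.twoDimLift i j fun a => if a = a₁ then 1 else if a = a₂ then s else t
  have hψ₁ : ψ (P.arrow a₁) = single 0 1 1 := by
    simp [ψ, P.twoDimLift_arrow i j _ h₁.1 h₁.2]
  have hψ₂ : ψ (P.arrow a₂ - s • P.arrow a₁) = 0 := by
    simp [ψ, P.twoDimLift_arrow i j _ h₁.1 h₁.2, P.twoDimLift_arrow i j _ h₂.1 h₂.2, h₁₂.symm]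
  have hψ₃ : ψ (P.arrow a₃ - t • P.arrow a₁) = 0 := by
    simp [ψ, P.twoDimLift_arrow i j _ h₁.1 h₁.2, P.twoDimLift_arrow i j _ h₃.1 h₃.2, h₁₃.symm,
      h₂₃.symm]
  obtain ⟨m, lam, key⟩ := hW ψ ⟨_, hψ₁⟩
  obtain ⟨k, l, hk⟩ : ∃ k l, eval lam (F a₁ ⟨m, k, l⟩) ≠ 0 := by
    have hne : ψ (P.arrow a₁) ≠ 0 := fun h => by simpa using congrFun₂ (hψ₁.symm.trans h) 0 1
    simpa [F] using (key _).not.mp hne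
  have h₂' := (key _).mp hψ₂ k l
  have h₃' := (key _).mp hψ₃ k l
  simp only [TameWitness.coeff_sub_smul, eval_sub, eval_mul, eval_C, sub_eq_zero] at h₂' h₃'
  exact hst ⟨m, k, l⟩ lam hk h₂' h₃'

/-- The Gabriel quiver of a tame finite-dimensional algebra has at most two arrows between
any two vertices. -/
theorem at_most_two_parallel_arrows
    (K : Type) [Field K] [IsAlgClosed K]
    (Λ : Type) [Ring Λ] [Algebra K Λ] [FiniteDimensional K Λ]
    (Q : FinQuiv) (P : AdmissiblePresentation K Q Λ)
    (hind : IndecAlg Λ) (htame : IsTame K Λ) :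
    ∀ i j : Q.V, (Finset.univ.filter fun a : Q.A => Q.s a = i ∧ Q.t a = j).card ≤ 2 :=
  at_most_two_parallel_arrows_general K Λ Q P htame
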